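/- Let k be a field and f, g : B → A two morphisms of k-bialgebras. Set S := {b ∈ B | f(b) = g(b)} and let D be the sum of all subcoalgebras of B contained in S, which is a subbialgebra of B. Then the pair (D, i), with i : D → B the canonical inclusion, is an equalizer of f and g in the category of k-bialgebras. -/

import Mathlib

universe u v w

/-- `V` is a subcoalgebra of the coalgebra `C`: the comultiplication maps `V` into
the image of `V ⊗ V` in `C ⊗ C`. -/
def IsSubcoalgebra {k : Type u} [CommRing k] {C : Type v} [AddCommGroup C] [Module k C]
    [Coalgebra k C] (V : Submodule k C) : Prop :=
  ∀ v ∈ V, Coalgebra.comul (R := k) v ∈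
    LinearMap.range (TensorProduct.map V.subtype V.subtype)

/-!
Over a field, tensor products of injective linear maps are injective. Hence a subspace `V` with
`Δ V ⊆ V ⊗ V` carries a unique coalgebra structure making the inclusion a coalgebra map,
and the coalgebra (and bialgebra) axioms on `V` can be checked after embedding into `B`,
`B ⊗ B`, `B ⊗ B ⊗ B`.

The subcoalgebras on which `f` and `g` agree contain `k·1` and are closed under sums and, since
`Δ` is multiplicative, under products. So their sum `D` is the largest one, and it is a
subbialgebra. Conversely, if a bialgebra map `h` equalizes `f` and `g`, its image is a
subcoalgebra on which `f` and `g` agree, so `h` lands in `D`.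
-/

open TensorProduct Coalgebra

namespace CoalgHom

variable {k : Type u} [Field k] {A C : Type*} [AddCommGroup A] [Module k A] [CoalgebraStruct k A]
  [AddCommGroup C] [Module k C] [Coalgebra k C] (i : A →ₗc[k] C)

theorem map_comp_rTensor_comul :
    map (map i.toLinearMap i.toLinearMap) i.toLinearMap ∘ₗ comul.rTensor A =
      comul.rTensor C ∘ₗ map i.toLinearMap i.toLinearMap := by
  rw [LinearMap.rTensor, LinearMap.rTensor, ← map_comp, ← map_comp, i.map_comp_comul]
  rfl

theorem map_comp_lTensor_comul :
    map i.toLinearMap (map i.toLinearMap i.toLinearMap) ∘ₗ comul.lTensor A =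
      comul.lTensor C ∘ₗ map i.toLinearMap i.toLinearMap := by
  rw [LinearMap.lTensor, LinearMap.lTensor, ← map_comp, ← map_comp, i.map_comp_comul]
  rfl

theorem lTensor_comp_rTensor_counit :
    i.toLinearMap.lTensor k ∘ₗ counit.rTensor A =
      counit.rTensor C ∘ₗ map i.toLinearMap i.toLinearMap := by
  rw [LinearMap.rTensor, LinearMap.rTensor, LinearMap.lTensor, ← map_comp, ← map_comp,
    i.counit_comp]
  rfl

theorem rTensor_comp_lTensor_counit :
    i.toLinearMap.rTensor k ∘ₗ counit.lTensor A =
      counit.lTensor C ∘ₗ map i.toLinearMap i.toLinearMap := by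
  rw [LinearMap.lTensor, LinearMap.lTensor, LinearMap.rTensor, ← map_comp, ← map_comp,
    i.counit_comp]
  rfl

abbrev coalgebraOfInjective (hi : Function.Injective i) : Coalgebra k A where
  coassoc := by
    have hi3 : Function.Injective (map i.toLinearMap (map i.toLinearMap i.toLinearMap)) :=
      map_injective_of_flat_flat _ _ hi (map_injective_of_flat_flat _ _ hi hi)
    refine LinearMap.ext fun x => hi3 ?_
    have hassoc := map_map_assoc i.toLinearMap i.toLinearMap i.toLinearMap
      (comul.rTensor A (comul x))
    have hr := LinearMap.congr_fun i.map_comp_rTensor_comul (comul x)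
    have hl := LinearMap.congr_fun i.map_comp_lTensor_comul (comul x)
    have hcomul := LinearMap.congr_fun i.map_comp_comul x
    simp only [LinearMap.comp_apply, LinearEquiv.coe_coe] at hr hl hcomul ⊢
    rw [hassoc, hr, hcomul, coassoc_apply, hl, hcomul]
  rTensor_counit_comp_comul := by
    refine LinearMap.ext fun x =>
      map_injective_of_flat_flat LinearMap.id _ Function.injective_id hi ?_
    have hcounit := LinearMap.congr_fun i.lTensor_comp_rTensor_counit (comul x)
    have hcomul := LinearMap.congr_fun i.map_comp_comul x
    simp only [LinearMap.comp_apply] at hcounit hcomul ⊢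
    rw [← LinearMap.lTensor_def, hcounit, hcomul, rTensor_counit_comul]
    rfl
  lTensor_counit_comp_comul := by
    refine LinearMap.ext fun x =>
      map_injective_of_flat_flat _ LinearMap.id hi Function.injective_id ?_
    have hcounit := LinearMap.congr_fun i.rTensor_comp_lTensor_counit (comul x)
    have hcomul := LinearMap.congr_fun i.map_comp_comul x
    simp only [LinearMap.comp_apply] at hcounit hcomul ⊢
    rw [← LinearMap.rTensor_def, hcounit, hcomul, lTensor_counit_comul]
    rfl

end CoalgHom

abbrev BialgHom.bialgebraOfInjective {k : Type u} [Field k] {A B : Type*} [Ring A] [Algebra k A]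
    [CoalgebraStruct k A] [Ring B] [Bialgebra k B] (i : A →ₐc[k] B)
    (hi : Function.Injective i) : Bialgebra k A :=
  letI := i.toCoalgHom.coalgebraOfInjective hi
  have hi2 : Function.Injective (map i.toLinearMap i.toLinearMap) :=
    map_injective_of_flat_flat _ _ hi hi
  have map_mul' (x y : A ⊗[k] A) : map i.toLinearMap i.toLinearMap (x * y) =
      map i.toLinearMap i.toLinearMap x * map i.toLinearMap i.toLinearMap y :=
    map_mul (Algebra.TensorProduct.map i.toAlgHom i.toAlgHom) x y
  have comul_apply (x : A) : map i.toLinearMap i.toLinearMap (comul x) = comul (i x) :=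
    LinearMap.congr_fun i.map_comp_comul x
  Bialgebra.mk' k A
    (by rw [← CoalgHomClass.counit_comp_apply i, map_one, Bialgebra.counit_one])
    (fun {a b} => by
      rw [← CoalgHomClass.counit_comp_apply i, map_mul, Bialgebra.counit_mul,
        CoalgHomClass.counit_comp_apply, CoalgHomClass.counit_comp_apply])
    (hi2 <| by
      rw [comul_apply, map_one, Bialgebra.comul_one]
      exact (map_one (Algebra.TensorProduct.map i.toAlgHom i.toAlgHom)).symm)
    (fun {a b} => hi2 <| by
      rw [comul_apply, map_mul, Bialgebra.comul_mul, map_mul', comul_apply, comul_apply])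

section ClosureProperties

variable {k : Type u} [CommRing k]

theorem isSubcoalgebra_sSup {C : Type v} [AddCommGroup C] [Module k C] [Coalgebra k C]
    {S : Set (Submodule k C)} (hS : ∀ V ∈ S, IsSubcoalgebra V) : IsSubcoalgebra (sSup S) := by
  intro x hx
  rw [sSup_eq_iSup'] at hx
  induction hx using Submodule.iSup_induction' with
  | mem V x hx => exact range_mapIncl_mono (le_sSup V.2) (le_sSup V.2) (hS V V.2 x hx)
  | zero => simp
  | add x y _ _ hx hy => simpa using add_mem hx hy

theorem CoalgHom.isSubcoalgebra_range {A : Type*} {C : Type v} [AddCommMonoid A] [Module k A]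
    [CoalgebraStruct k A] [AddCommGroup C] [Module k C] [Coalgebra k C] (h : A →ₗc[k] C) :
    IsSubcoalgebra (LinearMap.range h.toLinearMap) := by
  rintro _ ⟨x, rfl⟩
  refine ⟨map h.toLinearMap.rangeRestrict h.toLinearMap.rangeRestrict (comul x), ?_⟩
  rw [← LinearMap.comp_apply, ← map_comp]
  exact LinearMap.congr_fun h.map_comp_comul x

theorem IsSubcoalgebra.mul {B : Type v} [Ring B] [Bialgebra k B] {V W : Submodule k B}
    (hV : IsSubcoalgebra V) (hW : IsSubcoalgebra W) : IsSubcoalgebra (V * W) := by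
  have hprod (s : V ⊗[k] V) (t : W ⊗[k] W) :
      map V.subtype V.subtype s * map W.subtype W.subtype t ∈
        LinearMap.range (map (V * W).subtype (V * W).subtype) := by
    induction s using TensorProduct.induction_on with
    | zero => simp
    | add s s' hs hs' => simpa [add_mul] using add_mem hs hs'
    | tmul v v' =>
      induction t using TensorProduct.induction_on with
      | zero => simp
      | add t t' ht ht' => simpa [mul_add] using add_mem ht ht'
      | tmul w w' =>
        exact ⟨⟨v * w, Submodule.mul_mem_mul v.2 w.2⟩ ⊗ₜ
          ⟨v' * w', Submodule.mul_mem_mul v'.2 w'.2⟩, by simp⟩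
  intro x hx
  induction hx using Submodule.mul_induction_on' with
  | mem_mul_mem v hv w hw =>
    obtain ⟨s, hs⟩ := hV v hv
    obtain ⟨t, ht⟩ := hW w hw
    rw [Bialgebra.comul_mul, ← hs, ← ht]
    exact hprod s t
  | add x _ y _ hx hy => simpa using add_mem hx hy

end ClosureProperties

theorem Submodule.map_subtype_injective {k : Type u} [Field k] {M : Type v} [AddCommGroup M]
    [Module k M] (V : Submodule k M) : Function.Injective (TensorProduct.map V.subtype V.subtype) :=
  map_injective_of_flat_flat _ _ V.injective_subtype V.injective_subtype

namespace IsSubcoalgebra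

variable {k : Type u} [Field k] {C : Type v} [AddCommGroup C] [Module k C] [Coalgebra k C]
  {V : Submodule k C}

noncomputable def comul (hV : IsSubcoalgebra V) : V →ₗ[k] V ⊗[k] V :=
  (LinearEquiv.ofInjective _ (Submodule.map_subtype_injective V)).symm.toLinearMap ∘ₗ
    (Coalgebra.comul ∘ₗ V.subtype).codRestrict _ fun x => hV x x.2

theorem map_subtype_comul (hV : IsSubcoalgebra V) (x : V) :
    map V.subtype V.subtype (hV.comul x) = Coalgebra.comul (x : C) :=
  LinearEquiv.ofInjective_symm_apply (h := Submodule.map_subtype_injective V) _ _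

end IsSubcoalgebra

structure Subbialgebra (k : Type u) [Field k] (B : Type v) [Ring B] [Bialgebra k B]
    extends Subalgebra k B where
  isSubcoalgebra : IsSubcoalgebra (Subalgebra.toSubmodule toSubalgebra)

namespace Subbialgebra

variable {k : Type u} [Field k] {B : Type v} [Ring B] [Bialgebra k B] (S : Subbialgebra k B)

noncomputable instance : CoalgebraStruct k S.toSubalgebra where
  comul := S.isSubcoalgebra.comul
  counit := counit ∘ₗ S.toSubalgebra.val.toLinearMap

noncomputable def val : S.toSubalgebra →ₐc[k] B where
  __ := S.toSubalgebra.val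
  map_smul' := map_smul S.toSubalgebra.val
  counit_comp := rfl
  map_comp_comul := LinearMap.ext S.isSubcoalgebra.map_subtype_comul

theorem val_injective : Function.Injective S.val := Subtype.val_injective

noncomputable instance : Bialgebra k S.toSubalgebra := S.val.bialgebraOfInjective S.val_injective

variable {X : Type*} [Semiring X] [Algebra k X] [CoalgebraStruct k X]

noncomputable def codRestrict (h : X →ₐc[k] B) (hh : ∀ x, h x ∈ S.toSubalgebra) :
    X →ₐc[k] S.toSubalgebra where
  __ := (h : X →ₐ[k] B).codRestrict S.toSubalgebra hh
  map_smul' := map_smul ((h : X →ₐ[k] B).codRestrict S.toSubalgebra hh)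
  counit_comp := h.counit_comp
  map_comp_comul := by
    refine LinearMap.ext fun x =>
      Submodule.map_subtype_injective (Subalgebra.toSubmodule S.toSubalgebra) ?_
    rw [LinearMap.comp_apply, LinearMap.comp_apply, ← LinearMap.comp_apply (map _ _),
      ← map_comp]
    exact (LinearMap.congr_fun h.map_comp_comul x).trans
      (S.isSubcoalgebra.map_subtype_comul ⟨h x, hh x⟩).symm

@[simp]
theorem val_comp_codRestrict (h : X →ₐc[k] B) (hh : ∀ x, h x ∈ S.toSubalgebra) :
    S.val.comp (S.codRestrict h hh) = h := rfl

theorem existsUnique_val_comp_eq (h : X →ₐc[k] B) (hh : ∀ x, h x ∈ S.toSubalgebra) :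
    ∃! h' : X →ₐc[k] S.toSubalgebra, S.val.comp h' = h :=
  ⟨S.codRestrict h hh, S.val_comp_codRestrict h hh, fun _ hh' => BialgHom.ext fun x =>
    S.val_injective (DFunLike.congr_fun (hh'.trans (S.val_comp_codRestrict h hh).symm) x)⟩

end Subbialgebra

namespace BialgHom

variable {k : Type u} [Field k] {A B : Type v} [Ring A] [Ring B] [Bialgebra k A] [Bialgebra k B]
  (f g : B →ₐc[k] A)

def eqSubcoalgebras : Set (Submodule k B) :=
  {V | IsSubcoalgebra V ∧
    V ≤ LinearMap.ker (f.toCoalgHom.toLinearMap - g.toCoalgHom.toLinearMap)}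

variable {f g}

theorem mem_eqSubcoalgebras {V : Submodule k B} :
    V ∈ f.eqSubcoalgebras g ↔ IsSubcoalgebra V ∧ ∀ x ∈ V, f x = g x := by
  simp only [eqSubcoalgebras, ← LinearMap.eqLocus_eq_ker_sub, Set.mem_ofPred_eq]
  rfl

theorem eq_of_mem_sSup_eqSubcoalgebras {x : B} (hx : x ∈ sSup (f.eqSubcoalgebras g)) :
    f x = g x := by
  have hker := sSup_le (fun V (hV : V ∈ f.eqSubcoalgebras g) => hV.2) hx
  rwa [← LinearMap.eqLocus_eq_ker_sub, LinearMap.mem_eqLocus] at hker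

theorem range_mem_eqSubcoalgebras {X : Type*} [Semiring X] [Algebra k X] [CoalgebraStruct k X]
    (h : X →ₐc[k] B) (hfg : f.comp h = g.comp h) :
    LinearMap.range h.toLinearMap ∈ f.eqSubcoalgebras g := by
  refine mem_eqSubcoalgebras.2 ⟨h.toCoalgHom.isSubcoalgebra_range, ?_⟩
  rintro _ ⟨x, rfl⟩
  exact DFunLike.congr_fun hfg x

theorem isSubcoalgebra_sSup_eqSubcoalgebras : IsSubcoalgebra (sSup (f.eqSubcoalgebras g)) :=
  isSubcoalgebra_sSup fun _ hV => hV.1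

theorem one_mem_sSup_eqSubcoalgebras : (1 : B) ∈ sSup (f.eqSubcoalgebras g) := by
  have hunit : f.comp (Bialgebra.unitBialgHom k B) = g.comp (Bialgebra.unitBialgHom k B) :=
    BialgHom.ext fun r => (AlgHomClass.commutes f r).trans (AlgHomClass.commutes g r).symm
  exact le_sSup (range_mem_eqSubcoalgebras _ hunit) ⟨1, map_one (Bialgebra.unitBialgHom k B)⟩

theorem mul_mem_sSup_eqSubcoalgebras {x y : B} (hx : x ∈ sSup (f.eqSubcoalgebras g))
    (hy : y ∈ sSup (f.eqSubcoalgebras g)) : x * y ∈ sSup (f.eqSubcoalgebras g) := by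
  have hsq : sSup (f.eqSubcoalgebras g) * sSup (f.eqSubcoalgebras g) ∈ f.eqSubcoalgebras g := by
    refine mem_eqSubcoalgebras.2 ⟨isSubcoalgebra_sSup_eqSubcoalgebras.mul
      isSubcoalgebra_sSup_eqSubcoalgebras, fun z hz => ?_⟩
    induction hz using Submodule.mul_induction_on' with
    | mem_mul_mem a ha b hb =>
      rw [map_mul, map_mul, eq_of_mem_sSup_eqSubcoalgebras ha, eq_of_mem_sSup_eqSubcoalgebras hb]
    | add a _ b _ ha hb => rw [map_add, map_add, ha, hb]
  exact le_sSup hsq (Submodule.mul_mem_mul hx hy)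

variable (f g) in
noncomputable def equalizer : Subbialgebra k B where
  toSubalgebra := (sSup (f.eqSubcoalgebras g)).toSubalgebra one_mem_sSup_eqSubcoalgebras
    fun _ _ => mul_mem_sSup_eqSubcoalgebras
  isSubcoalgebra := isSubcoalgebra_sSup_eqSubcoalgebras

theorem comp_equalizer_val : f.comp (f.equalizer g).val = g.comp (f.equalizer g).val :=
  BialgHom.ext fun x => eq_of_mem_sSup_eqSubcoalgebras (f := f) (g := g) x.2

theorem mem_equalizer_of_comp_eq {X : Type*} [Semiring X] [Algebra k X] [CoalgebraStruct k X]
    {h : X →ₐc[k] B} (hfg : f.comp h = g.comp h) (x : X) :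
    h x ∈ (f.equalizer g).toSubalgebra :=
  le_sSup (range_mem_eqSubcoalgebras h hfg) (LinearMap.mem_range_self _ x)

end BialgHom

/-- Let `f, g : B → A` be bialgebra maps and let `D` be the sum of all subcoalgebras of
`B` contained in `S = {b | f b = g b}` (a subbialgebra of `B`).  Then `(D, i)`, with
`i` the canonical inclusion, is an equalizer of `f` and `g` in the category of
`k`-bialgebras: there is a bialgebra `D'` and an injective bialgebra map `i : D' → B`
whose image is exactly `D`, such that `f ∘ i = g ∘ i` and every bialgebra map
`h : X → B` with `f ∘ h = g ∘ h` factors uniquely through `i`. -/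
theorem sum_of_subcoalgebras_is_equalizer_bialg {k : Type u} [Field k] {B A : Type v}
    [Ring B] [Ring A] [Bialgebra k B] [Bialgebra k A]
    (f g : B →ₐc[k] A) (D : Submodule k B)
    (hD : D = sSup {V : Submodule k B | IsSubcoalgebra V ∧
      V ≤ LinearMap.ker (f.toCoalgHom.toLinearMap - g.toCoalgHom.toLinearMap)}) :
    ∃ (D' : Type v) (_ring : Ring D') (_bi : Bialgebra k D') (i : D' →ₐc[k] B),
      Function.Injective ⇑i ∧
      Set.range ⇑i = (D : Set B) ∧
      f.comp i = g.comp i ∧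
      ∀ (X : Type w) [Ring X] [Bialgebra k X] (h : X →ₐc[k] B),
        f.comp h = g.comp h → ∃! h' : X →ₐc[k] D', i.comp h' = h := by
  subst hD
  exact ⟨(f.equalizer g).toSubalgebra, inferInstance, inferInstance, (f.equalizer g).val,
    (f.equalizer g).val_injective, Subtype.range_val, BialgHom.comp_equalizer_val,
    fun X _ _ h hfg => (f.equalizer g).existsUnique_val_comp_eq h
      (BialgHom.mem_equalizer_of_comp_eq hfg)⟩
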